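/- arXiv:2307.15328 — 6 statements merged into one kernel-verified Lean document; each statement's English description precedes it below -/
import Mathlib

section
/- For a finite group G and a nontrivial normal subgroup H of G, we have (ψ(H) - |H|)/|G| + o(G/H) ≤ o(G), where ψ(K) = Σ_{x∈K} o(x) and o(K) = ψ(K)/|K| is the average order. In particular, o(G/H) < o(G). -/
/-- `psi G` is the sum of the orders of the elements of `G`. -/
noncomputable def psi (G : Type*) [Group G] : ℕ := ∑ᶠ x : G, orderOf x

/-- `avgO G` is the average order of the elements of `G`. -/
noncomputable def avgO (G : Type*) [Group G] : ℚ := psi G / Nat.card G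

/-!
Write `o` for the order. For `x ∉ H` the order of `xH` divides `o(x)`, while the `|H|` elements
`x ∈ H` all map to the identity of `G/H`. Since each coset of `H` has `|H|` elements,
`|H| ψ(G/H) = ∑_{x ∈ G} o(xH) ≤ |H| + ∑_{x ∉ H} o(x) = |H| + ψ(G) - ψ(H)`;
dividing by `|G| = |H| |G/H|` gives the inequality. It is strict because a nontrivial
group `H` has an element of order at least `2`, so `|H| < ψ(H)`.
-/

open Finset

theorem QuotientGroup.sum_comp_mk {G M : Type*} [Group G] [Fintype G] [AddCommMonoid M]
    (H : Subgroup G) [Fintype (G ⧸ H)] (f : G ⧸ H → M) :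
    ∑ x : G, f x = Nat.card H • ∑ q, f q := by
  classical
  let e : G ≃ (G ⧸ H) × H := Subgroup.groupEquivQuotientProdSubgroup
  have hmk (p : (G ⧸ H) × H) : ((e.symm p : G) : G ⧸ H) = p.1 :=
    congrArg Prod.fst (e.apply_symm_apply p)
  rw [← e.symm.sum_comp, Fintype.sum_prod_type_right]
  simp only [hmk, sum_const, card_univ, Nat.card_eq_fintype_card]

section Psi

variable {G : Type*} [Group G]

theorem psi_eq_sum [Fintype G] : psi G = ∑ x : G, orderOf x :=
  finsum_eq_sum_of_fintype _

theorem card_lt_psi [Finite G] [Nontrivial G] : Nat.card G < psi G := by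
  have := Fintype.ofFinite G
  obtain ⟨g, hg⟩ := exists_ne (1 : G)
  rw [psi_eq_sum, Nat.card_eq_fintype_card, ← card_univ, card_eq_sum_ones]
  refine sum_lt_sum (fun x _ => orderOf_pos x) ⟨g, mem_univ g, ?_⟩
  exact lt_of_le_of_ne (orderOf_pos g) (Ne.symm (mt orderOf_eq_one_iff.mp hg))

theorem card_mul_psi_quotient_add_psi_le [Finite G] (H : Subgroup G) [H.Normal] :
    Nat.card H * psi (G ⧸ H) + psi H ≤ psi G + Nat.card H := by
  classical
  have := Fintype.ofFinite G
  have hsplit (f : G → ℕ) : ∑ x : H, f x + ∑ x : {x // x ∉ H}, f x = ∑ x, f x :=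
    Fintype.sum_subtype_add_sum_subtype (· ∈ H) f
  have hpsi_split : psi G = psi H + ∑ x : {x // x ∉ H}, orderOf (x : G) := by
    simp only [psi_eq_sum, ← hsplit, Subgroup.orderOf_coe]
  have hquot_split : ∑ x : G, orderOf (x : G ⧸ H)
      = Nat.card H + ∑ x : {x // x ∉ H}, orderOf ((x : G) : G ⧸ H) := by
    simp only [← hsplit, (QuotientGroup.eq_one_iff _).mpr (SetLike.coe_mem _), orderOf_one,
      sum_const, card_univ, smul_eq_mul, mul_one, Nat.card_eq_fintype_card]
  have hle :
      ∑ x : {x // x ∉ H}, orderOf ((x : G) : G ⧸ H) ≤ ∑ x : {x // x ∉ H}, orderOf (x : G) :=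
    sum_le_sum fun x _ =>
      Nat.le_of_dvd (orderOf_pos _) (orderOf_map_dvd (QuotientGroup.mk' H) x)
  have hquot : ∑ x : G, orderOf (x : G ⧸ H) = Nat.card H * psi (G ⧸ H) := by
    rw [QuotientGroup.sum_comp_mk, psi_eq_sum, smul_eq_mul]
  omega

theorem avgO_quotient_eq [Finite G] (H : Subgroup G) [H.Normal] :
    avgO (G ⧸ H) = Nat.card H * psi (G ⧸ H) / Nat.card G := by
  have hH : (Nat.card H : ℚ) ≠ 0 := Nat.cast_ne_zero.mpr Nat.card_pos.ne'
  rw [avgO, H.card_eq_card_quotient_mul_card_subgroup, Nat.cast_mul,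
    mul_comm (Nat.card (G ⧸ H) : ℚ), mul_div_mul_left _ _ hH]

end Psi

theorem avgO_quotient_lt {G : Type*} [Group G] [Finite G] (H : Subgroup G) [H.Normal]
    (hH : H ≠ ⊥) :
    ((psi H : ℚ) - Nat.card H) / Nat.card G + avgO (G ⧸ H) ≤ avgO G ∧
      avgO (G ⧸ H) < avgO G := by
  have hkey : (Nat.card H * psi (G ⧸ H) + psi H : ℚ) ≤ psi G + Nat.card H := by
    exact_mod_cast card_mul_psi_quotient_add_psi_le H
  have hcard : (Nat.card H : ℚ) < psi H := by
    have := (Subgroup.nontrivial_iff_ne_bot H).mpr hH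
    exact_mod_cast card_lt_psi
  have hG : (0 : ℚ) < Nat.card G := by exact_mod_cast Nat.card_pos
  have hle : ((psi H : ℚ) - Nat.card H) / Nat.card G + avgO (G ⧸ H) ≤ avgO G := by
    rw [avgO_quotient_eq, avgO, ← add_div]
    gcongr
    linarith
  exact ⟨hle, (lt_add_of_pos_left _ (div_pos (sub_pos.mpr hcard) hG)).trans_le hle⟩
end

section
/- If m/n is a rational number in lowest terms with m even, then there is no finite group G whose average order o(G) = ψ(G)/|G| equals m/n. -/
lemma psi_odd (G : Type*) [Group G] [Finite G] : Odd (psi G) := by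
  classical
  have : Fintype G := Fintype.ofFinite G
  rw [psi, finsum_eq_sum_of_fintype]
  rw [← Nat.not_even_iff_odd, even_iff_two_dvd,
    ← ZMod.natCast_eq_zero_iff]
  push_cast
  have h0 : ∑ x ∈ (Finset.univ : Finset G).erase 1, (orderOf x : ZMod 2) = 0 := by
    refine Finset.sum_involution (fun x _ => x⁻¹) ?_ ?_ ?_ ?_
    · intro a ha
      rw [orderOf_inv, ← two_mul, show (2 : ZMod 2) = 0 from rfl, zero_mul]
    · intro a ha hf hcontra
      have h' : a⁻¹ = a := hcontra
      have hne : a ≠ 1 := Finset.ne_of_mem_erase ha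
      have hsq : a * a = 1 := by nth_rewrite 2 [← h']; exact mul_inv_cancel a
      have hdvd : orderOf a ∣ 2 := orderOf_dvd_of_pow_eq_one (by rwa [pow_two])
      rcases (Nat.dvd_prime Nat.prime_two).mp hdvd with h1 | h2
      · exact hne (orderOf_eq_one_iff.mp h1)
      · exact hf (by rw [h2]; rfl)
    · intro a ha
      exact Finset.mem_erase.mpr ⟨inv_ne_one.mpr (Finset.ne_of_mem_erase ha), Finset.mem_univ _⟩
    · intro a ha; simp
  rw [← Finset.sum_erase_add _ _ (Finset.mem_univ (1 : G)), h0, zero_add]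
  simp

theorem avgO_ne_even_over_odd (m n : ℕ) (hm : 0 < m) (hn : 0 < n)
    (hcop : Nat.Coprime m n) (heven : Even m)
    (G : Type*) [Group G] [Finite G] : avgO G ≠ (m : ℚ) / n := by
  intro h
  have hO : Odd (psi G) := psi_odd G
  have hc : 0 < Nat.card G := Nat.card_pos
  rw [avgO, div_eq_div_iff (by exact_mod_cast hc.ne') (by exact_mod_cast hn.ne')] at h
  have key : psi G * n = m * Nat.card G := by exact_mod_cast h
  have hnodd : Odd n := by
    rcases Nat.even_or_odd n with he | ho
    · exfalso
      have : 2 ∣ Nat.gcd m n := Nat.dvd_gcd heven.two_dvd he.two_dvd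
      rw [hcop] at this
      omega
    · exact ho
  have h1 : Odd (psi G * n) := hO.mul hnodd
  have h2 : Even (m * Nat.card G) := heven.mul_right _
  rw [key] at h1
  exact (Nat.not_even_iff_odd.mpr h1) h2
end

section
/- Let G be a finite group with a subgroup H of index 2 such that o(H) > 3.6. Then o(G) > 2.8. -/
theorem avgO_gt_of_index_two {G : Type*} [Group G] [Finite G] (H : Subgroup G)
    (hi : H.index = 2) (h : (18/5 : ℚ) < avgO H) :
    (14/5 : ℚ) < avgO G := by
  classical
  have : Fintype G := Fintype.ofFinite G
  set n := Nat.card H with hn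
  have hcard : Nat.card G = 2 * n := by
    rw [← Subgroup.index_mul_card H, hi]
  have hnpos : 0 < n := Nat.card_pos
  -- cardinality of the complement of H
  have hcardH : (Finset.univ.filter (fun x : G => x ∈ H)).card = n := by
    rw [hn, Nat.card_eq_fintype_card, Fintype.card_subtype]
  have hsplit := Finset.card_filter_add_card_filter_not
    (s := (Finset.univ : Finset G)) (p := fun x : G => x ∈ H)
  have hcardG : (Finset.univ : Finset G).card = 2 * n := by
    rw [Finset.card_univ, ← Nat.card_eq_fintype_card, hcard]
  have hcardC : (Finset.univ.filter (fun x : G => ¬ x ∈ H)).card = n := by omega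
  -- key inequality on psi
  have hkey : psi H + 2 * n ≤ psi G := by
    rw [psi, psi, finsum_eq_sum_of_fintype, finsum_eq_sum_of_fintype]
    rw [← Finset.sum_filter_add_sum_filter_not Finset.univ (fun x : G => x ∈ H) orderOf]
    have h1 : (∑ x : H, orderOf x) =
        ∑ x ∈ Finset.univ.filter (fun x : G => x ∈ H), orderOf x := by
      rw [Finset.sum_subtype (p := fun x : G => x ∈ H) _ (by simp) orderOf]
      exact Finset.sum_congr rfl fun x _ => (orderOf_submonoid x).symm
    have h2 : 2 * n ≤ ∑ x ∈ Finset.univ.filter (fun x : G => ¬ x ∈ H), orderOf x := by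
      have := Finset.card_nsmul_le_sum
        (Finset.univ.filter (fun x : G => ¬ x ∈ H)) orderOf 2 (fun x hx => by
          simp only [Finset.mem_filter] at hx
          have h1x : x ≠ 1 := fun e => hx.2 (e ▸ H.one_mem)
          have hp := orderOf_pos x
          have : orderOf x ≠ 1 := fun e => h1x (orderOf_eq_one_iff.mp e)
          omega)
      simpa [smul_eq_mul, hcardC, Nat.mul_comm] using this
    omega
  -- now rational arithmetic
  have hpsiH : (18/5 : ℚ) * n < psi H := by
    rw [avgO] at h
    rw [← hn] at h
    have hnq : (0:ℚ) < n := by exact_mod_cast hnpos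
    exact (lt_div_iff₀ hnq).mp h
  rw [avgO, hcard]
  have h2nq : (0:ℚ) < (2 * n : ℕ) := by positivity
  rw [lt_div_iff₀ (by exact_mod_cast h2nq)]
  have hkeyq : (psi H : ℚ) + 2 * n ≤ psi G := by exact_mod_cast hkey
  push_cast
  push_cast at hpsiH hkeyq
  nlinarith [hpsiH, hkeyq]
end

section
/- Let G be a finite group with a normal subgroup H of index 3 such that o(H) > 2.4. Then o(G) > 2.8. -/
theorem avgO_gt_of_index_three {G : Type*} [Group G] [Finite G] (H : Subgroup G)
    [H.Normal] (hi : H.index = 3) (h : (12/5 : ℚ) < avgO H) :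
    (14/5 : ℚ) < avgO G := by
  classical
  have : Fintype G := Fintype.ofFinite G
  set n : ℕ := Nat.card H with hn
  have hnpos : 0 < n := Nat.card_pos
  have hcardG : Nat.card G = 3 * n := by
    rw [← hi, ← Subgroup.index_mul_card H]
  -- key: psi H ≤ sum over elements of H in G
  have hpsiH : psi H = ∑ x ∈ Finset.univ.filter (· ∈ H), orderOf x := by
    rw [psi, finsum_eq_sum_of_fintype]
    have he : ∀ i : H, orderOf i = orderOf (i : G) :=
      fun i => (orderOf_injective H.subtype H.subtype_injective i).symm
    simp_rw [he]
    exact (Finset.sum_subtype _ (fun x => by simp) orderOf).symm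
  have hpsiG : psi G = ∑ x : G, orderOf x := finsum_eq_sum_of_fintype _
  -- elements outside H have order ≥ 3
  have hout : ∀ x : G, x ∉ H → 3 ≤ orderOf x := by
    intro x hx
    set q := QuotientGroup.mk' H
    have h1 : q x ≠ 1 := by
      simpa [q, QuotientGroup.eq_one_iff] using hx
    have hdvd : orderOf (q x) ∣ 3 := by
      have := orderOf_dvd_natCard (q x)
      rwa [show Nat.card (G ⧸ H) = 3 from hi] at this
    have h3 : orderOf (q x) = 3 := by
      rcases (Nat.prime_three).eq_one_or_self_of_dvd _ hdvd with h' | h'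
      · exact absurd (orderOf_eq_one_iff.mp h') h1
      · exact h'
    have : orderOf (q x) ∣ orderOf x := orderOf_map_dvd q x
    rw [h3] at this
    exact Nat.le_of_dvd (orderOf_pos x) this
  -- cardinality of complement
  have hcardfil : (Finset.univ.filter (· ∈ H)).card = n := by
    rw [hn, Nat.card_eq_fintype_card, Fintype.card_subtype]
  have hcardnot : (Finset.univ.filter (¬ · ∈ H)).card = 2 * n := by
    have := Finset.card_filter_add_card_filter_not (s := Finset.univ) (p := (· ∈ H))
    have hG : (Finset.univ : Finset G).card = 3 * n := by
      rw [Finset.card_univ, ← Nat.card_eq_fintype_card]; exact hcardG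
    omega
  -- key inequality
  have hkey : psi H + 6 * n ≤ psi G := by
    rw [hpsiG, ← Finset.sum_filter_add_sum_filter_not Finset.univ (· ∈ H) orderOf, ← hpsiH]
    have : 6 * n ≤ ∑ x ∈ Finset.univ.filter (¬ · ∈ H), orderOf x := by
      calc 6 * n = (Finset.univ.filter (¬ · ∈ H)).card * 3 := by rw [hcardnot]; ring
        _ ≤ _ := Finset.card_nsmul_le_sum _ _ _ (fun x hx => hout x (by simpa using hx))
    omega
  -- now rationals
  have hnQ : (0:ℚ) < (n:ℚ) := by exact_mod_cast hnpos
  have hH : 12 * (n:ℚ) < 5 * psi H := by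
    rw [avgO, div_lt_div_iff₀ (by norm_num)
      (show (0:ℚ) < (Nat.card H : ℚ) by exact_mod_cast hnpos)] at h
    rw [hn]; linarith
  have hkeyQ : (psi H : ℚ) + 6 * n ≤ psi G := by exact_mod_cast hkey
  rw [avgO, hcardG]
  rw [div_lt_div_iff₀ (by norm_num) (by push_cast; linarith)]
  push_cast
  linarith
end

section
/- Let G be a finite group with a subgroup M of index 2. If the number of involutions in G \ M is greater than 2|M|/3, then M is nilpotent. -/
/-!
Conjugation by an involution `t ∉ M` is an automorphism `σ` of `M`, and `x ↦ t * x` maps the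
involutions of `G \ M` injectively into the set `S` of elements of `M` inverted by `σ`, so
`|S| > 2|M|/3`. If `x, y` and `x * y` all lie in `S`, then `x` and `y` commute; hence for `x ∈ S`
the centralizer of `x` contains `S ∩ x⁻¹S`, which has more than `|M|/3` elements, so it has index
at most 2 in `M` and contains every commutator. Since `|S| > |M|/2`, the set `S` generates `M`,
so every commutator is central and `M` is nilpotent of class at most 2.
-/

open scoped commutatorElement Pointwise

namespace Subgroup

variable {K : Type*} [Group K]

theorem index_lt_of_card_lt_mul [Finite K] (H : Subgroup K) {n : ℕ}
    (h : Nat.card K < n * Nat.card H) : H.index < n :=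
  Nat.lt_of_mul_lt_mul_right (H.index_mul_card ▸ h)

theorem closure_eq_top_of_card_lt_two_mul_ncard [Finite K] {S : Set K}
    (h : Nat.card K < 2 * S.ncard) : closure S = ⊤ := by
  have hS : S.ncard ≤ Nat.card (closure S) := by
    rw [← Nat.card_coe_set_eq]
    exact Nat.card_mono (closure S : Set K).toFinite subset_closure
  have hlt := (closure S).index_lt_of_card_lt_mul (n := 2) (by omega)
  have hne := (closure S).index_ne_zero_of_finite
  exact index_eq_one.mp (by omega)

theorem commutatorElement_mem_of_index_le_two (H : Subgroup K) [H.FiniteIndex]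
    (hH : H.index ≤ 2) (a b : K) : ⁅a, b⁆ ∈ H := by
  obtain hH1 | hH2 : H.index = 1 ∨ H.index = 2 := by
    have := FiniteIndex.index_ne_zero (H := H); omega
  · simp [index_eq_one.mp hH1]
  · simp only [commutatorElement_def, mul_mem_iff_of_index_two hH2, inv_mem_iff]
    tauto

end Subgroup

theorem Group.isNilpotent_of_commutatorElement_mem_center {K : Type*} [Group K]
    (h : ∀ a b : K, ⁅a, b⁆ ∈ Subgroup.center K) : Group.IsNilpotent K :=
  ⟨2, eq_top_iff.mpr fun a _ ↦ Subgroup.mem_upperCentralSeries_succ_iff.mpr fun b ↦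
    (Subgroup.upperCentralSeries_one K).symm ▸ h a b⟩

namespace MonoidHom

variable {K : Type*} [Group K] (σ : K →* K)

def invertedSet : Set K := {k | σ k = k⁻¹}

theorem mem_invertedSet {k : K} : k ∈ σ.invertedSet ↔ σ k = k⁻¹ := Iff.rfl

variable {σ}

theorem commute_of_mem_invertedSet {x y : K} (hx : x ∈ σ.invertedSet)
    (hy : y ∈ σ.invertedSet) (hxy : x * y ∈ σ.invertedSet) : Commute x y := by
  have h : σ (x * y) = (x * y)⁻¹ := hxy
  rw [map_mul, hx, hy, mul_inv_rev] at h
  exact Commute.inv_inv_iff.mp h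

theorem invertedSet_inter_smul_subset_centralizer {x : K} (hx : x ∈ σ.invertedSet) :
    σ.invertedSet ∩ x⁻¹ • σ.invertedSet ⊆ Subgroup.centralizer {x} := by
  rintro y ⟨hy, hxy⟩
  rw [SetLike.mem_coe, Subgroup.mem_centralizer_singleton_iff]
  exact (commute_of_mem_invertedSet hx hy (Set.mem_inv_smul_set_iff.mp hxy)).symm.eq

variable [Finite K]

theorem index_centralizer_le_two_of_mem_invertedSet
    (h : 2 * Nat.card K < 3 * σ.invertedSet.ncard) {x : K} (hx : x ∈ σ.invertedSet) :
    (Subgroup.centralizer {x}).index ≤ 2 := by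
  set S := σ.invertedSet
  have hunion := Set.ncard_inter_add_ncard_union S (x⁻¹ • S)
  have hU := Set.ncard_le_card (S ∪ x⁻¹ • S)
  have hC : (S ∩ x⁻¹ • S).ncard ≤ Nat.card (Subgroup.centralizer {x}) := by
    rw [← Nat.card_coe_set_eq]
    exact Nat.card_mono (Set.toFinite _) (invertedSet_inter_smul_subset_centralizer hx)
  rw [Set.ncard_smul_set] at hunion
  -- `|S ∩ x⁻¹S| ≥ 2|S| - |K| > |K| / 3`
  have := (Subgroup.centralizer {x}).index_lt_of_card_lt_mul (n := 3) (by omega)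
  omega

theorem isNilpotent_of_two_mul_card_lt_three_mul_ncard_invertedSet
    (h : 2 * Nat.card K < 3 * σ.invertedSet.ncard) : Group.IsNilpotent K := by
  have hgen := Subgroup.closure_eq_top_of_card_lt_two_mul_ncard (S := σ.invertedSet) (by omega)
  refine Group.isNilpotent_of_commutatorElement_mem_center fun a b ↦ ?_
  rw [Subgroup.center_eq_iInf hgen]
  simp only [Subgroup.mem_iInf]
  intro x hx
  exact (Subgroup.centralizer {x}).commutatorElement_mem_of_index_le_two
    (index_centralizer_le_two_of_mem_invertedSet h hx) a b

end MonoidHom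

theorem card_involutions_not_mem_le_ncard_invertedSet {G : Type*} [Group G] (M : Subgroup G)
    [M.Normal] [Finite M] (hi : M.index = 2) {t : G} (htM : t ∉ M) (ht : orderOf t = 2) :
    Nat.card {x : G // x ∉ M ∧ orderOf x = 2} ≤
      (MulAut.conjNormal t : M ≃* M).toMonoidHom.invertedSet.ncard := by
  have mul_self {x : G} (hx : orderOf x = 2) : x * x = 1 := by
    rw [← pow_two, ← hx, pow_orderOf_eq_one]
  rw [← Nat.card_coe_set_eq]
  refine Nat.card_le_card_of_injective
    (fun x ↦ ⟨⟨t * x, (M.mul_mem_iff_of_index_two hi).mpr (by simp [htM, x.2.1])⟩, ?_⟩) ?_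
  · rw [MonoidHom.mem_invertedSet, Subtype.ext_iff]
    simp [MulAut.conjNormal_apply, inv_eq_of_mul_eq_one_right (mul_self ht),
      inv_eq_of_mul_eq_one_right (mul_self x.2.2), ← mul_assoc, mul_self ht]
  · intro x y hxy
    exact Subtype.ext (mul_left_cancel (congrArg (fun z ↦ (z.1 : G)) hxy))

theorem nilpotent_of_many_involutions_outside {G : Type*} [Group G] [Finite G]
    (M : Subgroup G) (hi : M.index = 2)
    (h : 2 * Nat.card M < 3 * Nat.card {x : G // x ∉ M ∧ orderOf x = 2}) :
    Group.IsNilpotent M := by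
  have : M.Normal := Subgroup.normal_of_index_eq_two hi
  obtain ⟨⟨t, htM, ht⟩⟩ := (Nat.card_pos_iff.mp (by omega :
    0 < Nat.card {x : G // x ∉ M ∧ orderOf x = 2})).1
  apply MonoidHom.isNilpotent_of_two_mul_card_lt_three_mul_ncard_invertedSet
    (σ := (MulAut.conjNormal t : M ≃* M).toMonoidHom)
  calc 2 * Nat.card M < 3 * Nat.card {x : G // x ∉ M ∧ orderOf x = 2} := h
    _ ≤ 3 * _ := Nat.mul_le_mul_left 3 (card_involutions_not_mem_le_ncard_invertedSet M hi htM ht)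
end

section
/- Let G be a finite 2-group of order at least 16 with o(G) < 2.8. Then the number of involutions in G satisfies n_2(G) > (3/5)|G| − 2. -/
theorem involutions_of_two_group_avgO_lt {G : Type*} [Group G] [Finite G]
    (h2 : IsPGroup 2 G) (hcard : 16 ≤ Nat.card G) (h : avgO G < 14/5) :
    (3/5 : ℚ) * Nat.card G - 2 < Nat.card {x : G // orderOf x = 2} := by
  classical
  have : Fintype G := Fintype.ofFinite G
  have hn0 : 0 < Nat.card G := Nat.card_pos
  have hpsi : psi G = ∑ x : G, orderOf x := finsum_eq_sum_of_fintype _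
  have hk : Nat.card {x : G // orderOf x = 2}
      = (Finset.univ.filter (fun x : G => orderOf x = 2)).card := by
    rw [Nat.card_eq_fintype_card, Fintype.card_subtype]
  set k := (Finset.univ.filter (fun x : G => orderOf x = 2)).card with hkdef
  have key : 4 * Nat.card G ≤ psi G + 2 * k + 3 := by
    have hterm : ∀ x : G, 4 ≤ orderOf x + (if orderOf x = 2 then 2 else 0)
        + (if x = 1 then 3 else 0) := by
      intro x
      obtain ⟨m, hm⟩ := h2 x
      obtain ⟨j, hj, hoj⟩ := (Nat.dvd_prime_pow Nat.prime_two).mp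
        (orderOf_dvd_of_pow_eq_one hm)
      match j, hoj with
      | 0, hoj =>
        have hx1 : x = 1 := orderOf_eq_one_iff.mp (by simpa using hoj)
        simp [hx1]
      | 1, hoj => simp [hoj]
      | (j+2), hoj =>
        have h4 : 4 ≤ orderOf x := by
          rw [hoj]
          calc 4 = 2 ^ 2 := rfl
          _ ≤ 2 ^ (j + 2) := Nat.pow_le_pow_right (by norm_num) (by omega)
        omega
    have hsum : ∑ _x : G, 4 ≤ ∑ x : G, (orderOf x + (if orderOf x = 2 then 2 else 0)
        + (if x = 1 then 3 else 0)) := Finset.sum_le_sum (fun x _ => hterm x)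
    have h1 : ∑ _x : G, 4 = 4 * Nat.card G := by
      simp [Finset.sum_const, Nat.card_eq_fintype_card, Nat.mul_comm]
    have h2' : ∑ x : G, (if orderOf x = 2 then 2 else 0) = 2 * k := by
      rw [hkdef, Finset.sum_ite, Finset.sum_const, Finset.sum_const]
      simp [Nat.mul_comm]
    have h3 : ∑ x : G, (if x = 1 then 3 else 0) = 3 := by
      rw [Finset.sum_ite_eq' Finset.univ (1 : G) (fun _ => 3)]
      simp
    rw [Finset.sum_add_distrib, Finset.sum_add_distrib] at hsum
    rw [h1, h2', h3, ← hpsi] at hsum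
    omega
  have hq : (psi G : ℚ) / (Nat.card G : ℚ) < 14/5 := h
  have hnq : (0 : ℚ) < (Nat.card G : ℚ) := by exact_mod_cast hn0
  have hpq : (psi G : ℚ) < 14/5 * (Nat.card G : ℚ) := by
    rw [div_lt_iff₀ hnq] at hq; linarith
  have keyq : (4 : ℚ) * Nat.card G ≤ (psi G : ℚ) + 2 * k + 3 := by
    exact_mod_cast key
  rw [hk]
  push_cast
  linarith
end
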